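/- Immediate complier potential-outcome means: under Independence, Monotonicity, Relevance, and absorbing treatment, for each wave w ∈ {1,...,w̄}, P(T_1(1) > T_1(0)) > 0 and E[Y_w(w) | T_1(1) > T_1(0)] = (E[1[T_1 = 1] · Y_w | Z = 1] − E[1[T_1 = 1] · Y_w | Z = 0]) / (E[1[T_1 = 1] | Z = 1] − E[1[T_1 = 1] | Z = 0]). -/

import Mathlib

/-!
Absorption makes `T_w(z) = w` equivalent to `T_1(z) = 1`, so on `{Z = z}` the observed
`1[T_1 = 1] · Y_w` is the potential quantity `1[T_w(z) = w] · Y_w(w)`, which is independent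
of `Z`; hence each intention-to-treat mean is `E[1[T_1(z) = 1] · Y_w(w)]`. With wave-one
exposures in `{0, 1}` and `T_1(0) ≤ T_1(1)`, the difference `1[T_1(1) = 1] - 1[T_1(0) = 1]` is
the indicator of the complier event `C = {T_1(0) < T_1(1)}`, so the Wald ratio is
`E[1_C · Y_w(w)] / P(C)`. Relevance forces `P(C) > 0`, because otherwise `T_1(0) = T_1(1)`
almost surely.
-/

open MeasureTheory ProbabilityTheory Finset

/-- Conditional mean `E[X | A]`: the expectation of `X` under `P` conditioned on the event `A`. -/
noncomputable def cmean {Ω : Type*} [MeasurableSpace Ω] (P : MeasureTheory.Measure Ω)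
    (A : Set Ω) (X : Ω → ℝ) : ℝ :=
  ∫ ω, X ω ∂(P[|A])

def IsAbsorbingPath (wbar : ℕ) (t : ℕ → ℕ) : Prop :=
  ∀ w, 1 ≤ w → w < wbar → (1 ≤ t w → t (w + 1) = t w + 1) ∧ (t w = 0 → t (w + 1) ≤ 1)

theorem IsAbsorbingPath.eq_self_iff {wbar : ℕ} {t : ℕ → ℕ} (ht : IsAbsorbingPath wbar t) {w : ℕ}
    (hw : w ∈ Set.Icc 1 wbar) : t w = w ↔ t 1 = 1 := by
  obtain ⟨hw1, hwbar⟩ := hw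
  suffices (t 1 = 0 → t w < w) ∧ (1 ≤ t 1 → t w + 1 = t 1 + w) by omega
  induction w, hw1 using Nat.le_induction with
  | base => omega
  | succ v hv ih =>
    have := ht v hv (by omega)
    have := ih (by omega)
    omega

section

variable {Ω : Type*} [MeasurableSpace Ω]

lemma cmean_eq_setIntegral_div (P : Measure Ω) (A : Set Ω) (X : Ω → ℝ) :
    cmean P A X = (∫ ω in A, X ω ∂P) / P.real A := by
  rw [cmean, ProbabilityTheory.cond, integral_smul_measure, ENNReal.toReal_inv, smul_eq_mul,
    measureReal_def, inv_mul_eq_div]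

lemma cmean_congr {P : Measure Ω} {A : Set Ω} (hA : MeasurableSet A) {X X' : Ω → ℝ}
    (h : Set.EqOn X X' A) : cmean P A X = cmean P A X' :=
  integral_congr_ae <| (ae_cond_mem hA).mono fun _ hω => h hω

lemma measure_setOf_eq_zero_ne_zero {P : Measure Ω} [IsProbabilityMeasure P] {Z : Ω → ℕ}
    (hZ : Measurable Z) (hZbin : ∀ ω, Z ω ≤ 1) (hZ1 : P {ω | Z ω = 1} < 1) :
    P {ω | Z ω = 0} ≠ 0 := by
  have hcompl : {ω | Z ω = 0} = {ω | Z ω = 1}ᶜ := Set.ext fun ω => by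
    have := hZbin ω
    simp only [Set.mem_ofPred_eq, Set.mem_compl_iff]
    omega
  rw [hcompl, prob_compl_eq_one_sub (s := {ω | Z ω = 1}) (hZ (measurableSet_singleton 1))]
  exact (tsub_pos_of_lt hZ1).ne'

lemma setIntegral_eq_one_sub_setIntegral_eq_one {μ : Measure Ω} {a b : Ω → ℕ} (ha : Measurable a)
    (hb : Measurable b) (hab : a ≤ᵐ[μ] b) (hb1 : ∀ᵐ ω ∂μ, b ω ≤ 1) {f : Ω → ℝ}
    (hf : Integrable f μ) :
    ∫ ω in {ω | b ω = 1}, f ω ∂μ - ∫ ω in {ω | a ω = 1}, f ω ∂μ =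
      ∫ ω in {ω | a ω < b ω}, f ω ∂μ := by
  have hA : MeasurableSet {ω | a ω = 1} := ha (measurableSet_singleton 1)
  have hB : MeasurableSet {ω | b ω = 1} := hb (measurableSet_singleton 1)
  rw [← integral_indicator hA, ← integral_indicator hB,
    ← integral_indicator (measurableSet_lt ha hb),
    ← integral_sub (hf.indicator hB) (hf.indicator hA)]
  refine integral_congr_ae ?_
  filter_upwards [hab, hb1] with ω hab hb1
  obtain h | h : b ω = 0 ∨ b ω = 1 := by omega
  · simp [h, show a ω = 0 by omega]
  · obtain h' | h' : a ω = 0 ∨ a ω = 1 := by omega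
    · simp [h, h']
    · simp [h, h']

lemma measure_setOf_lt_pos_of_integral_lt {μ : Measure Ω} {f g : Ω → ℝ} (hfg : f ≤ᵐ[μ] g)
    (h : ∫ ω, f ω ∂μ < ∫ ω, g ω ∂μ) : 0 < μ {ω | f ω < g ω} := by
  refine pos_iff_ne_zero.2 fun h0 => h.ne (integral_congr_ae (hfg.antisymm ?_))
  exact ae_iff.2 (by simpa only [not_le] using h0)

namespace ProbabilityTheory.IndepFun

variable {β : Type*} [MeasurableSpace β] {P : Measure Ω} {Z : Ω → β}

lemma setIntegral_preimage {X : Ω → ℝ} (hXZ : IndepFun X Z P) (hZ : Measurable Z)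
    (hX : Integrable X P) {B : Set β} (hB : MeasurableSet B) :
    ∫ ω in Z ⁻¹' B, X ω ∂P = (∫ ω, X ω ∂P) * P.real (Z ⁻¹' B) := by
  have hB1 : Measurable (B.indicator fun _ => (1 : ℝ)) := measurable_const.indicator hB
  calc ∫ ω in Z ⁻¹' B, X ω ∂P = ∫ ω, X ω * B.indicator (fun _ => 1) (Z ω) ∂P := by
        rw [← integral_indicator (hZ hB)]
        congr with ω
        by_cases h : Z ω ∈ B <;> simp [h]
    _ = (∫ ω, X ω ∂P) * ∫ ω, B.indicator (fun _ => 1) (Z ω) ∂P :=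
        (hXZ.comp measurable_id hB1).integral_fun_mul_eq_mul_integral
          hX.aestronglyMeasurable (hB1.comp hZ).aestronglyMeasurable
    _ = (∫ ω, X ω ∂P) * P.real (Z ⁻¹' B) := by
        rw [← integral_indicator_one (hZ hB)]
        rfl

lemma cmean_setOf_eq [IsFiniteMeasure P] [MeasurableSingletonClass β] {X : β → Ω → ℝ} {z : β}
    (hXZ : IndepFun (X z) Z P) (hZ : Measurable Z) (hX : Integrable (X z) P)
    (hz : P {ω | Z ω = z} ≠ 0) :
    cmean P {ω | Z ω = z} (fun ω => X (Z ω) ω) = ∫ ω, X z ω ∂P := by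
  calc _ = cmean P (Z ⁻¹' {z}) (X z) :=
        cmean_congr (hZ (measurableSet_singleton z)) fun ω (hω : Z ω = z) => by rw [hω]
    _ = _ := by
        rw [cmean_eq_setIntegral_div, hXZ.setIntegral_preimage hZ hX (measurableSet_singleton z),
          mul_div_cancel_right₀ _ ((measureReal_ne_zero_iff (measure_ne_top P (Z ⁻¹' {z}))).2 hz)]

end ProbabilityTheory.IndepFun

variable {P : Measure Ω} [IsFiniteMeasure P] {Z : Ω → ℕ}

lemma measure_compliers_pos {T : ℕ → Ω → ℕ} (hZ : Measurable Z) (hT : ∀ z, Measurable (T z))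
    (hTbin : ∀ z ≤ 1, ∀ ω, T z ω ≤ 1) (hind : ∀ z ≤ 1, IndepFun (T z) Z P)
    (hZz : ∀ z ≤ 1, P {ω | Z ω = z} ≠ 0) (hmono : T 0 ≤ᵐ[P] T 1)
    (hrel : cmean P {ω | Z ω = 0} (fun ω => (T (Z ω) ω : ℝ))
      < cmean P {ω | Z ω = 1} (fun ω => (T (Z ω) ω : ℝ))) :
    0 < P {ω | T 0 ω < T 1 ω} := by
  have hmean : ∀ z ≤ 1,
      cmean P {ω | Z ω = z} (fun ω => (T (Z ω) ω : ℝ)) = ∫ ω, (T z ω : ℝ) ∂P :=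
    fun z hz => IndepFun.cmean_setOf_eq (X := fun z ω => (T z ω : ℝ))
      ((hind z hz).comp measurable_from_top measurable_id) hZ
      (.of_mem_Icc 0 1 (measurable_from_top.comp (hT z)).aemeasurable (ae_of_all _ fun ω =>
        ⟨Nat.cast_nonneg _, by exact_mod_cast hTbin z hz ω⟩)) (hZz z hz)
  rw [hmean 0 zero_le_one, hmean 1 le_rfl] at hrel
  simpa only [Nat.cast_lt] using
    measure_setOf_lt_pos_of_integral_lt (hmono.mono fun ω h => by exact_mod_cast h) hrel

lemma cmean_eq_setIntegral_of_isAbsorbingPath {T : ℕ → ℕ → Ω → ℕ} {Y : ℕ → ℕ → Ω → ℝ}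
    {wbar w z : ℕ} (hZ : Measurable Z) (hT : Measurable (T w z)) (hw : w ∈ Set.Icc 1 wbar)
    (hAbs : ∀ ω, IsAbsorbingPath wbar (fun v => T v z ω))
    (hind : IndepFun (fun ω => (Y w w ω, T w z ω)) Z P) (hZz : P {ω | Z ω = z} ≠ 0)
    {f : ℝ → ℝ} (hf : Measurable f) (hint : Integrable (fun ω => f (Y w w ω)) P) :
    cmean P {ω | Z ω = z} (fun ω => if T 1 (Z ω) ω = 1 then f (Y w (T w (Z ω) ω) ω) else 0) =
      ∫ ω in {ω | T 1 z ω = 1}, f (Y w w ω) ∂P := by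
  have hS : MeasurableSet {ω | T w z ω = w} := hT (measurableSet_singleton w)
  have hφ : Measurable ((Prod.snd ⁻¹' {w}).indicator fun p : ℝ × ℕ => f p.1) :=
    (hf.comp measurable_fst).indicator (measurable_snd (measurableSet_singleton w))
  have hX : (fun ω => if T 1 z ω = 1 then f (Y w (T w z ω) ω) else 0) =
      {ω | T w z ω = w}.indicator fun ω => f (Y w w ω) := by
    ext ω
    by_cases h : T 1 z ω = 1
    · simp [h, ((hAbs ω).eq_self_iff hw).2 h]
    · simp [h, mt ((hAbs ω).eq_self_iff hw).1 h]
  rw [IndepFun.cmean_setOf_eq (X := fun z ω => if T 1 z ω = 1 then f (Y w (T w z ω) ω) else 0)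
      (hX ▸ hind.comp hφ measurable_id) hZ (hX ▸ hint.indicator hS) hZz,
    hX, integral_indicator hS, Set.ext fun ω => (hAbs ω).eq_self_iff hw]

end

theorem immediate_complier_potential_outcome_means_general
    {Ω : Type*} [MeasurableSpace Ω] (P : MeasureTheory.Measure Ω) [IsProbabilityMeasure P]
    (Z : Ω → ℕ) (hZmeas : Measurable Z) (hZbin : ∀ ω, Z ω ≤ 1)
    (hZpos : 0 < P {ω | Z ω = 1}) (hZlt : P {ω | Z ω = 1} < 1)
    (wbar : ℕ) (hwbar : 1 ≤ wbar)
    (T : ℕ → ℕ → Ω → ℕ) (hTmeas : ∀ w z, Measurable (T w z))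
    (hTrange : ∀ w ∈ Set.Icc 1 wbar, ∀ z ≤ 1, ∀ ω, T w z ω ≤ w)
    (Y : ℕ → ℕ → Ω → ℝ)
    (hYint : ∀ w ∈ Set.Icc 1 wbar, ∀ t ≤ w, MeasureTheory.Integrable (Y w t) P)
    (hAbs : ∀ z ≤ 1, ∀ w, 1 ≤ w → w < wbar → ∀ ω,
      (1 ≤ T w z ω → T (w + 1) z ω = T w z ω + 1) ∧
      (T w z ω = 0 → T (w + 1) z ω ≤ 1))
    (hIndep : ∀ w ∈ Set.Icc 1 wbar,
      IndepFun (fun ω => ((fun t : ℕ => Y w t ω), T w 1 ω, T w 0 ω)) Z P)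
    (hMono : ∀ w ∈ Set.Icc 1 wbar, ∀ᵐ ω ∂P, T w 0 ω ≤ T w 1 ω)
    (hRel : cmean P {ω | Z ω = 0} (fun ω => (T 1 (Z ω) ω : ℝ))
          < cmean P {ω | Z ω = 1} (fun ω => (T 1 (Z ω) ω : ℝ))) :
    0 < P {ω | T 1 0 ω < T 1 1 ω} ∧
    ∀ w ∈ Set.Icc 1 wbar,
      cmean P {ω | T 1 0 ω < T 1 1 ω} (fun ω => Y w w ω) =
        (cmean P {ω | Z ω = 1} (fun ω => if T 1 (Z ω) ω = 1 then Y w (T w (Z ω) ω) ω else 0)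
          - cmean P {ω | Z ω = 0} (fun ω => if T 1 (Z ω) ω = 1 then Y w (T w (Z ω) ω) ω else 0)) /
        (cmean P {ω | Z ω = 1} (fun ω => if T 1 (Z ω) ω = 1 then (1 : ℝ) else 0)
          - cmean P {ω | Z ω = 0} (fun ω => if T 1 (Z ω) ω = 1 then (1 : ℝ) else 0)) := by
  have h1 : (1 : ℕ) ∈ Set.Icc 1 wbar := ⟨le_rfl, hwbar⟩
  have hZz : ∀ z ≤ 1, P {ω | Z ω = z} ≠ 0 := by
    intro z hz
    interval_cases z
    exacts [measure_setOf_eq_zero_ne_zero hZmeas hZbin hZlt, hZpos.ne']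
  have hPath : ∀ z ≤ 1, ∀ ω, IsAbsorbingPath wbar fun w => T w z ω :=
    fun z hz ω w hw1 hw => hAbs z hz w hw1 hw ω
  have hIndepArm : ∀ w ∈ Set.Icc 1 wbar, ∀ z ≤ 1, IndepFun (fun ω => (Y w w ω, T w z ω)) Z P := by
    intro w hw z hz
    interval_cases z
    · exact (hIndep w hw).comp (φ := fun p => (p.1 w, p.2.2)) (by fun_prop) measurable_id
    · exact (hIndep w hw).comp (φ := fun p => (p.1 w, p.2.1)) (by fun_prop) measurable_id
  refine ⟨measure_compliers_pos hZmeas (hTmeas 1) (hTrange 1 h1)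
    (fun z hz => (hIndepArm 1 h1 z hz).comp measurable_snd measurable_id) hZz (hMono 1 h1) hRel,
    fun w hw => ?_⟩
  have arm := fun z hz (f : ℝ → ℝ) hf hint => cmean_eq_setIntegral_of_isAbsorbingPath hZmeas
    (hTmeas w z) hw (hPath z hz) (hIndepArm w hw z hz) (hZz z hz) (f := f) hf hint
  have hnum := fun z hz => arm z hz id measurable_id (hYint w hw w le_rfl)
  have hden := fun z hz => arm z hz (fun _ => 1) measurable_const (integrable_const 1)
  simp only [id] at hnum hden
  have hcompliers := fun (f : Ω → ℝ) (hf : Integrable f P) =>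
    setIntegral_eq_one_sub_setIntegral_eq_one (hTmeas 1 0) (hTmeas 1 1) (hMono 1 h1)
      (ae_of_all _ (hTrange 1 h1 1 le_rfl)) hf
  rw [hnum 1 le_rfl, hnum 0 zero_le_one, hden 1 le_rfl, hden 0 zero_le_one,
    hcompliers _ (hYint w hw w le_rfl), hcompliers _ (integrable_const 1), cmean_eq_setIntegral_div,
    setIntegral_const, smul_eq_mul, mul_one]

theorem immediate_complier_potential_outcome_means
    {Ω : Type*} [MeasurableSpace Ω] (P : MeasureTheory.Measure Ω) [IsProbabilityMeasure P]
    (Z : Ω → ℕ) (hZmeas : Measurable Z) (hZbin : ∀ ω, Z ω ≤ 1)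
    (hZpos : 0 < P {ω | Z ω = 1}) (hZlt : P {ω | Z ω = 1} < 1)
    (wbar : ℕ) (hwbar : 1 ≤ wbar)
    (T : ℕ → ℕ → Ω → ℕ) (hTmeas : ∀ w z, Measurable (T w z))
    (hTrange : ∀ w ∈ Set.Icc 1 wbar, ∀ z ≤ 1, ∀ ω, T w z ω ≤ w)
    (Y : ℕ → ℕ → Ω → ℝ) (hYmeas : ∀ w t, Measurable (Y w t))
    (hYint : ∀ w ∈ Set.Icc 1 wbar, ∀ t ≤ w, MeasureTheory.Integrable (Y w t) P)
    (hAbs : ∀ z ≤ 1, ∀ w, 1 ≤ w → w < wbar → ∀ ω,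
      (1 ≤ T w z ω → T (w + 1) z ω = T w z ω + 1) ∧
      (T w z ω = 0 → T (w + 1) z ω ≤ 1))
    (hIndep : ∀ w ∈ Set.Icc 1 wbar,
      IndepFun (fun ω => ((fun t : ℕ => Y w t ω), T w 1 ω, T w 0 ω)) Z P)
    (hMono : ∀ w ∈ Set.Icc 1 wbar, ∀ᵐ ω ∂P, T w 0 ω ≤ T w 1 ω)
    (hRel : cmean P {ω | Z ω = 0} (fun ω => (T 1 (Z ω) ω : ℝ))
          < cmean P {ω | Z ω = 1} (fun ω => (T 1 (Z ω) ω : ℝ))) :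
    0 < P {ω | T 1 0 ω < T 1 1 ω} ∧
    ∀ w ∈ Set.Icc 1 wbar,
      cmean P {ω | T 1 0 ω < T 1 1 ω} (fun ω => Y w w ω) =
        (cmean P {ω | Z ω = 1} (fun ω => if T 1 (Z ω) ω = 1 then Y w (T w (Z ω) ω) ω else 0)
          - cmean P {ω | Z ω = 0} (fun ω => if T 1 (Z ω) ω = 1 then Y w (T w (Z ω) ω) ω else 0)) /
        (cmean P {ω | Z ω = 1} (fun ω => if T 1 (Z ω) ω = 1 then (1 : ℝ) else 0)
          - cmean P {ω | Z ω = 0} (fun ω => if T 1 (Z ω) ω = 1 then (1 : ℝ) else 0)) :=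
  immediate_complier_potential_outcome_means_general P Z hZmeas hZbin hZpos hZlt wbar hwbar T hTmeas
    hTrange Y hYint hAbs hIndep hMono hRel
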